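/- (Extended Interpolation Theorem) Let X be a conjunction of a finite set of clauses and Y a disjunction of a finite set of conjunctions of literals, with X → Y valid. Then there exists a formula I such that X → I and I → Y are both valid, and moreover, if there exists a literal l such that l and l* occur in distinct clauses of X ∪ Y* (the set of clauses of X together with complements of the disjuncts of Y), then every propositional variable of I occurs in both X and Y. -/

import Mathlib

/-- Propositional formulas over variables indexed by naturals. -/
inductive PropForm where
  | var : Nat → PropForm
  | fls : PropForm
  | tru : PropForm
  | neg : PropForm → PropForm
  | conj : PropForm → PropForm → PropForm
  | disj : PropForm → PropForm → PropForm
deriving DecidableEq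

/-- Classical Boolean evaluation of a formula under a valuation. -/
def PropForm.eval (v : Nat → Bool) : PropForm → Bool
  | .var n => v n
  | .fls => false
  | .tru => true
  | .neg A => !(A.eval v)
  | .conj A B => A.eval v && B.eval v
  | .disj A B => A.eval v || B.eval v

/-- The propositional variables occurring in a formula. -/
def PropForm.vars : PropForm → Finset Nat
  | .var n => {n}
  | .fls => ∅
  | .tru => ∅
  | .neg A => A.vars
  | .conj A B => A.vars ∪ B.vars
  | .disj A B => A.vars ∪ B.vars

/-- A formula is valid iff true under every valuation. -/
def PropForm.Valid (A : PropForm) : Prop := ∀ v : Nat → Bool, A.eval v = true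

/-- Literals: a variable or its negation. -/
inductive Lit where
  | pos : Nat → Lit
  | neg : Nat → Lit
deriving DecidableEq

/-- The complement of a literal. -/
def Lit.compl : Lit → Lit
  | .pos n => .neg n
  | .neg n => .pos n

/-- The variable of a literal. -/
def Lit.var : Lit → Nat
  | .pos n => n
  | .neg n => n

/-- Evaluation of a literal. -/
def Lit.eval (v : Nat → Bool) : Lit → Bool
  | .pos n => v n
  | .neg n => !(v n)

/-- A literal as a formula. -/
def Lit.toForm : Lit → PropForm
  | .pos n => .var n
  | .neg n => .neg (.var n)

/-- A clause (finite set of literals read disjunctively) is satisfied by `v`. -/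
def clauseSat (v : Nat → Bool) (C : Finset Lit) : Prop := ∃ l ∈ C, l.eval v = true

/-- A conjunction of literals (finite set read conjunctively) is satisfied by `v`. -/
def cubeSat (v : Nat → Bool) (C : Finset Lit) : Prop := ∀ l ∈ C, l.eval v = true

/-! The interpolant is the CNF of `X` with its private variables (those not occurring in `Y`)
eliminated existentially, `∃p. A = A[⊤/p] ∨ A[⊥/p]`. It follows from `X`, and each of its models
agrees on the variables of `Y` with some model of `X`, hence satisfies `Y`. Its variables are
shared by `X` and `Y`. -/

namespace PropForm

def substConst (n : ℕ) (b : Bool) : PropForm → PropForm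
  | .var m => if m = n then (if b then .tru else .fls) else .var m
  | .fls => .fls
  | .tru => .tru
  | .neg A => .neg (A.substConst n b)
  | .conj A B => .conj (A.substConst n b) (B.substConst n b)
  | .disj A B => .disj (A.substConst n b) (B.substConst n b)

theorem eval_substConst (v : ℕ → Bool) (n : ℕ) (b : Bool) (A : PropForm) :
    (A.substConst n b).eval v = A.eval (Function.update v n b) := by
  induction A with
  | var m =>
    by_cases hm : m = n
    · subst hm; cases b <;> simp [substConst, eval]
    · simp [substConst, eval, hm]
  | _ => simp_all [substConst, eval]

theorem vars_substConst (n : ℕ) (b : Bool) (A : PropForm) :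
    (A.substConst n b).vars ⊆ A.vars.erase n := by
  induction A with
  | var m =>
    by_cases hm : m = n
    · cases b <;> simp [substConst, vars, hm]
    · simp [substConst, vars, hm]
  | fls | tru => simp [substConst, vars]
  | neg A ih => exact ih
  | conj A B ihA ihB | disj A B ihA ihB =>
    simp only [substConst, vars, Finset.erase_union_distrib]
    exact Finset.union_subset_union ihA ihB

def existsVar (n : ℕ) (A : PropForm) : PropForm :=
  .disj (A.substConst n true) (A.substConst n false)

theorem eval_existsVar {v : ℕ → Bool} {n : ℕ} {A : PropForm} :
    (A.existsVar n).eval v = true ↔ ∃ b, A.eval (Function.update v n b) = true := by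
  simp only [existsVar, eval, eval_substConst, Bool.or_eq_true, Bool.exists_bool]
  exact or_comm

theorem vars_existsVar (n : ℕ) (A : PropForm) : (A.existsVar n).vars ⊆ A.vars.erase n :=
  Finset.union_subset (vars_substConst n true A) (vars_substConst n false A)

def existsVars (ns : List ℕ) (A : PropForm) : PropForm :=
  ns.foldr existsVar A

theorem eval_existsVars {v : ℕ → Bool} {A : PropForm} {ns : List ℕ} :
    (A.existsVars ns).eval v = true ↔ ∃ w, (∀ m ∉ ns, w m = v m) ∧ A.eval w = true := by
  induction ns generalizing v with
  | nil => simp [existsVars, ← funext_iff]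
  | cons n ns ih =>
    simp only [existsVars, List.foldr_cons] at ih ⊢
    simp only [eval_existsVar, ih, List.mem_cons, not_or]
    constructor
    · rintro ⟨b, w, hw, hA⟩
      exact ⟨w, fun m ⟨hmn, hm⟩ => (hw m hm).trans (Function.update_of_ne hmn b v), hA⟩
    · rintro ⟨w, hw, hA⟩
      refine ⟨w n, w, fun m hm => ?_, hA⟩
      by_cases hmn : m = n
      · subst hmn; simp
      · rw [Function.update_of_ne hmn]; exact hw m ⟨hmn, hm⟩

theorem vars_existsVars (ns : List ℕ) (A : PropForm) :
    (A.existsVars ns).vars ⊆ A.vars \ ns.toFinset := by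
  induction ns with
  | nil => simp [existsVars]
  | cons n ns ih =>
    intro m hm
    have hm' := vars_existsVar n _ hm
    rw [Finset.mem_erase] at hm'
    have hm'' := ih hm'.2
    simp only [Finset.mem_sdiff, List.mem_toFinset, List.mem_cons, not_or] at hm'' ⊢
    exact ⟨hm''.1, hm'.1, hm''.2⟩

theorem exists_interpolant (A : PropForm) (Q : (ℕ → Bool) → Prop) (T : Finset ℕ)
    (hQ : ∀ v w, (∀ n ∈ T, v n = w n) → Q v → Q w) (hAQ : ∀ v, A.eval v = true → Q v) :
    ∃ I : PropForm, (∀ v, A.eval v = true → I.eval v = true) ∧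
      (∀ v, I.eval v = true → Q v) ∧ I.vars ⊆ A.vars ∩ T := by
  refine ⟨A.existsVars (A.vars \ T).toList, fun v hA => eval_existsVars.2 ⟨v, fun _ _ => rfl, hA⟩,
    fun v hI => ?_, fun n hn => ?_⟩
  · obtain ⟨w, hw, hA⟩ := eval_existsVars.1 hI
    exact hQ w v (fun n hn => hw n (by simp [hn])) (hAQ w hA)
  · have hn' := vars_existsVars _ A hn
    simp only [Finset.mem_sdiff, Finset.toList_toFinset, not_and, not_not] at hn'
    exact Finset.mem_inter.2 ⟨hn'.1, hn'.2 hn'.1⟩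

def bigDisj : List PropForm → PropForm
  | [] => .fls
  | A :: l => .disj A (bigDisj l)

def bigConj : List PropForm → PropForm
  | [] => .tru
  | A :: l => .conj A (bigConj l)

theorem eval_bigDisj (v : ℕ → Bool) :
    ∀ l : List PropForm, (bigDisj l).eval v = true ↔ ∃ A ∈ l, A.eval v = true
  | [] => by simp [bigDisj, eval]
  | A :: l => by simp [bigDisj, eval, eval_bigDisj v l]

theorem eval_bigConj (v : ℕ → Bool) :
    ∀ l : List PropForm, (bigConj l).eval v = true ↔ ∀ A ∈ l, A.eval v = true
  | [] => by simp [bigConj, eval]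
  | A :: l => by simp [bigConj, eval, eval_bigConj v l]

theorem mem_vars_bigDisj (n : ℕ) :
    ∀ l : List PropForm, n ∈ (bigDisj l).vars ↔ ∃ A ∈ l, n ∈ A.vars
  | [] => by simp [bigDisj, vars]
  | A :: l => by simp [bigDisj, vars, mem_vars_bigDisj n l]

theorem mem_vars_bigConj (n : ℕ) :
    ∀ l : List PropForm, n ∈ (bigConj l).vars ↔ ∃ A ∈ l, n ∈ A.vars
  | [] => by simp [bigConj, vars]
  | A :: l => by simp [bigConj, vars, mem_vars_bigConj n l]

end PropForm

open PropForm

theorem Lit.eval_toForm (v : ℕ → Bool) (l : Lit) : l.toForm.eval v = l.eval v := by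
  cases l <;> rfl

theorem Lit.vars_toForm (l : Lit) : l.toForm.vars = {l.var} := by
  cases l <;> rfl

theorem Lit.eval_congr {v w : ℕ → Bool} {l : Lit} (h : v l.var = w l.var) :
    l.eval v = l.eval w := by
  cases l <;> simp only [Lit.eval, Lit.var] at h ⊢ <;> rw [h]

noncomputable def clauseForm (C : Finset Lit) : PropForm :=
  bigDisj (C.toList.map Lit.toForm)

noncomputable def cnfForm (X : Finset (Finset Lit)) : PropForm :=
  bigConj (X.toList.map clauseForm)

theorem eval_clauseForm (v : ℕ → Bool) (C : Finset Lit) :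
    (clauseForm C).eval v = true ↔ clauseSat v C := by
  simp [clauseForm, eval_bigDisj, Lit.eval_toForm, clauseSat]

theorem mem_vars_clauseForm (n : ℕ) (C : Finset Lit) :
    n ∈ (clauseForm C).vars ↔ ∃ l ∈ C, l.var = n := by
  simp [clauseForm, mem_vars_bigDisj, Lit.vars_toForm, eq_comm]

theorem eval_cnfForm (v : ℕ → Bool) (X : Finset (Finset Lit)) :
    (cnfForm X).eval v = true ↔ ∀ C ∈ X, clauseSat v C := by
  simp [cnfForm, eval_bigConj, eval_clauseForm]

theorem mem_vars_cnfForm (n : ℕ) (X : Finset (Finset Lit)) :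
    n ∈ (cnfForm X).vars ↔ ∃ C ∈ X, ∃ l ∈ C, l.var = n := by
  simp [cnfForm, mem_vars_bigConj, mem_vars_clauseForm]

theorem cubeSat_congr {v w : ℕ → Bool} {D : Finset Lit} (h : ∀ l ∈ D, v l.var = w l.var)
    (hv : cubeSat v D) : cubeSat w D :=
  fun l hl => (Lit.eval_congr (h l hl)).symm.trans (hv l hl)

theorem stmt9 (X Y : Finset (Finset Lit))
    (hvalid : ∀ v : Nat → Bool, (∀ C ∈ X, clauseSat v C) → ∃ D ∈ Y, cubeSat v D) :
    ∃ I : PropForm,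
      (∀ v : Nat → Bool, (∀ C ∈ X, clauseSat v C) → I.eval v = true) ∧
      (∀ v : Nat → Bool, I.eval v = true → ∃ D ∈ Y, cubeSat v D) ∧
      ((∃ l : Lit, ∃ C₁ ∈ X ∪ Y.image (fun D => D.image Lit.compl),
          ∃ C₂ ∈ X ∪ Y.image (fun D => D.image Lit.compl),
            C₁ ≠ C₂ ∧ l ∈ C₁ ∧ l.compl ∈ C₂) →
        ∀ n ∈ I.vars, (∃ C ∈ X, ∃ l ∈ C, Lit.var l = n) ∧
          (∃ D ∈ Y, ∃ l ∈ D, Lit.var l = n)) := by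
  have hY_depends_on_vars : ∀ v w, (∀ n ∈ Y.biUnion fun D => D.image Lit.var, v n = w n) →
      (∃ D ∈ Y, cubeSat v D) → ∃ D ∈ Y, cubeSat w D := fun v w hvw ⟨D, hD, hv⟩ =>
    ⟨D, hD, cubeSat_congr (fun l hl => hvw _ (Finset.mem_biUnion.2
      ⟨D, hD, Finset.mem_image_of_mem _ hl⟩)) hv⟩
  obtain ⟨I, hXI, hIY, hvars⟩ := exists_interpolant (cnfForm X) _ _ hY_depends_on_vars
    (fun v hv => hvalid v ((eval_cnfForm v X).1 hv))
  refine ⟨I, fun v hv => hXI v ((eval_cnfForm v X).2 hv), hIY, fun _ n hn => ?_⟩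
  obtain ⟨hX, hY⟩ := Finset.mem_inter.1 (hvars hn)
  simp only [Finset.mem_biUnion, Finset.mem_image] at hY
  exact ⟨(mem_vars_cnfForm n X).1 hX, hY⟩
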